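/- Commutativity of independent transitions is preserved under abstraction (Lemma on POR in abstract state space): let α and β be independent transitions, s₁, s₂, s₃ concrete states and η an abstract state with s₁ ⊨ η, α(s₁) = s₂, β(s₂) = s₃. Let η' be the abstract successor of η under β (via the abstract strongest post-operator) and η'' the abstract successor of η' under α. Then there exist concrete states s₄, s₅ with β(s₁) = s₄, s₄ ⊨ η', α(s₄) = s₅, s₅ ⊨ η'', and s₃ = s₅. -/

import Mathlib

namespace POR

variable {S : Type}

/-- A transition is a deterministic partial function on states; it is enabled
in `s` if it is defined at `s`. -/
def Enabledf (α : S → Option S) (s : S) : Prop := (α s).isSome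

/-- Independence of two transitions in a given state: enabledness preservation
(in both directions) and commutativity. -/
def IndepAt (α β : S → Option S) (s : S) : Prop :=
  (Enabledf α s → (Enabledf β s ↔ ∃ s', α s = some s' ∧ Enabledf β s')) ∧
  (Enabledf β s → (Enabledf α s ↔ ∃ s', β s = some s' ∧ Enabledf α s')) ∧
  (Enabledf α s → Enabledf β s → (α s).bind β = (β s).bind α)

/-- Two transitions are independent if they are independent in every state. -/
def Indep (α β : S → Option S) : Prop := ∀ s, IndepAt α β s

theorem enabledf_of_eq_some {α : S → Option S} {s t : S} (h : α s = some t) : Enabledf α s := by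
  simp [Enabledf, h]

theorem IndepAt.exists_swap {α β : S → Option S} {s s₂ s₃ : S} (h : IndepAt α β s)
    (hα : α s = some s₂) (hβ : β s₂ = some s₃) : ∃ s₄, β s = some s₄ ∧ α s₄ = some s₃ := by
  obtain ⟨hpreserve, -, hcomm⟩ := h
  have hαs : Enabledf α s := enabledf_of_eq_some hα
  have hβs : Enabledf β s := (hpreserve hαs).mpr ⟨s₂, hα, enabledf_of_eq_some hβ⟩
  obtain ⟨s₄, hβ₄⟩ := Option.isSome_iff_exists.mp hβs
  have hsquare := hcomm hαs hβs
  rw [hα, hβ₄, Option.bind_some, Option.bind_some, hβ] at hsquare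
  exact ⟨s₄, hβ₄, hsquare.symm⟩

/-- commutativity of independent transitions is preserved under
abstraction. Abstract states are sets of concrete states; an abstract successor
over-approximates the concrete post-image of its predecessor. -/
theorem indep_commute_abstract (α β : S → Option S) (hind : Indep α β)
    (η η' η'' : S → Prop)
    (hpost' : ∀ s t, η s → β s = some t → η' t)
    (hpost'' : ∀ s t, η' s → α s = some t → η'' t)
    (s₁ s₂ s₃ : S)
    (h1 : η s₁) (h2 : α s₁ = some s₂) (h3 : β s₂ = some s₃) :
    ∃ s₄ s₅, β s₁ = some s₄ ∧ η' s₄ ∧ α s₄ = some s₅ ∧ η'' s₅ ∧ s₃ = s₅ := by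
  obtain ⟨s₄, h4, h5⟩ := (hind s₁).exists_swap h2 h3
  have hη' : η' s₄ := hpost' s₁ s₄ h1 h4
  exact ⟨s₄, s₃, h4, hη', h5, hpost'' s₄ s₃ hη' h5, rfl⟩
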